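/- Let M be a unitary operator on H that is causal relative to a neighborhood 𝒩. Then for every bounded operator T on H, T is local upon some finite subset of ℤ^n if and only if M† T M is local upon some finite subset of ℤ^n (that is, the algebra of local operators is invariant under conjugation by M). -/

import Mathlib

/-!
Locality is an algebraic condition: an operator is local upon `D` iff it commutes with every
matrix unit `|f⟩⟨g|` acting on finitely many cells outside `D` (the matrix coefficients of such
an operator can only depend on the cells of `D`). So the operators local upon `D` form a
subalgebra, the centraliser of these matrix units, and it is generated by the one-cell matrix
units at the cells of `D`.

Conjugation `A ↦ M† A M` is an algebra automorphism, and causality sends each one-cell generator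
at `x` into the algebra local upon `𝒩_x`; hence `M† T M` is local upon `⋃_{x ∈ D} 𝒩_x`.
Conversely, if `M† T M` is local upon `D` and `E` is a matrix unit on cells `S` avoiding
`⋃_{x ∈ D} 𝒱_x`, then `M† E M` is local upon `⋃_{y ∈ S} 𝒩_y`, which misses `D`; so `M† E M`
commutes with `M† T M`, hence `E` commutes with `T`, and `T` is local upon `⋃_{x ∈ D} 𝒱_x`.
-/

open scoped ENNReal

noncomputable section

namespace QCA

abbrev Lat (n : ℕ) : Type := Fin n → ℤ

def Conf (n : ℕ) (A : Type*) (q0 : A) : Type _ :=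
  {c : Lat n → A // {x : Lat n | c x ≠ q0}.Finite}

def c0 (n : ℕ) (A : Type*) (q0 : A) : Conf n A q0 :=
  ⟨fun _ => q0, by simp⟩

abbrev H (n : ℕ) (A : Type*) (q0 : A) : Type _ := lp (fun _ : Conf n A q0 => ℂ) 2

def eVec {n : ℕ} {A : Type*} {q0 : A} (c : Conf n A q0) : H n A q0 :=
  letI : DecidableEq (Conf n A q0) := Classical.decEq _
  lp.single 2 c 1

/-- Translation of a configuration by `z`: the configuration `x ↦ c (x + z)`. -/
def shiftConf {n : ℕ} {A : Type*} {q0 : A} (z : Lat n) (c : Conf n A q0) : Conf n A q0 :=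
  ⟨fun x => c.1 (x + z), by
    have h : {x : Lat n | c.1 (x + z) ≠ q0} ⊆ (fun x : Lat n => x + z) ⁻¹' {x | c.1 x ≠ q0} :=
      fun x hx => hx
    exact (c.2.preimage ((add_left_injective z).injOn)).subset h⟩

/-- Translation by `z` as a permutation of the set of finite configurations. -/
def shiftEquiv {n : ℕ} {A : Type*} (q0 : A) (z : Lat n) : Conf n A q0 ≃ Conf n A q0 where
  toFun := shiftConf z
  invFun := shiftConf (-z)
  left_inv c := Subtype.ext (funext fun x => by
    show c.1 (x + -z + z) = c.1 x
    rw [neg_add_cancel_right])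
  right_inv c := Subtype.ext (funext fun x => by
    show c.1 (x + z + -z) = c.1 x
    rw [add_neg_cancel_right])

theorem memℓp_comp_equiv {ι κ : Type*} (e : κ ≃ ι) {f : ι → ℂ} (hf : Memℓp f 2) :
    Memℓp (fun k => f (e k)) 2 := by
  have hp : 0 < (2 : ℝ≥0∞).toReal := by norm_num
  exact memℓp_gen ((e.summable_iff
    (f := fun i => ‖f i‖ ^ (2 : ℝ≥0∞).toReal)).mpr (hf.summable hp))

/-- The unitary operator on `ℓ²` induced by a permutation of the index set. -/
def lpCongr {ι κ : Type*} (e : ι ≃ κ) :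
    lp (fun _ : ι => ℂ) 2 ≃ₗᵢ[ℂ] lp (fun _ : κ => ℂ) 2 where
  toLinearEquiv :=
    { toFun := fun f => ⟨fun k => f (e.symm k), memℓp_comp_equiv e.symm (lp.memℓp f)⟩
      map_add' := fun f g => lp.ext (funext fun k => by
        simp [lp.coeFn_add] <;> rfl)
      map_smul' := fun r f => lp.ext (funext fun k => by
        simp [lp.coeFn_smul])
      invFun := fun g => ⟨fun i => g (e i), memℓp_comp_equiv e (lp.memℓp g)⟩
      left_inv := fun f => lp.ext (funext fun i => by simp)
      right_inv := fun g => lp.ext (funext fun k => by simp) }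
  norm_map' := fun f => by
    have hp : 0 < (2 : ℝ≥0∞).toReal := by norm_num
    rw [lp.norm_eq_tsum_rpow hp, lp.norm_eq_tsum_rpow hp]
    congr 1
    exact e.symm.tsum_eq (fun i => ‖f i‖ ^ (2 : ℝ≥0∞).toReal)

/-- The translation operator `τ_z` on the Hilbert space of finite configurations. -/
def tau {n : ℕ} {A : Type*} (q0 : A) (z : Lat n) : H n A q0 ≃ₗᵢ[ℂ] H n A q0 :=
  lpCongr (shiftEquiv q0 z)

/-- A bounded operator on `H` is translation invariant if `τ_z ∘ M ∘ τ_z⁻¹ = M` for all `z`. -/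
def TranslationInvariant {n : ℕ} {A : Type*} (q0 : A) (M : H n A q0 →L[ℂ] H n A q0) : Prop :=
  ∀ (z : Lat n) (v : H n A q0), tau q0 z (M ((tau q0 z).symm v)) = M v


section Local

variable {n : ℕ} {A : Type*} [Fintype A]

/-- The configuration agreeing with `f` on `D` and with `c` outside `D`. -/
def override {q0 : A} (D : Finset (Lat n)) (f : {x // x ∈ D} → A) (c : Conf n A q0) :
    Conf n A q0 :=
  ⟨fun x => if h : x ∈ D then f ⟨x, h⟩ else c.1 x, by
    refine Set.Finite.subset (Set.Finite.union D.finite_toSet c.2) ?_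
    intro x hx
    rcases Decidable.em (x ∈ D) with h | h
    · exact Set.mem_union_left _ h
    · exact Set.mem_union_right _ (by simpa [h] using hx)⟩

/-- A bounded operator on the Hilbert space of finite configurations is local upon the finite
set `D` of cells if its action on basis vectors only modifies, and only reads, the cells in `D`. -/
def IsLocalUpon (q0 : A) (D : Finset (Lat n)) (T : H n A q0 →L[ℂ] H n A q0) : Prop :=
  ∃ a : ({x // x ∈ D} → A) → ({x // x ∈ D} → A) → ℂ, ∀ c : Conf n A q0,
    T (eVec c) = ∑ f : {x // x ∈ D} → A,
      a f (fun x => c.1 x.1) • eVec (override D f c)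

/-- The neighborhood of the cell `x`: `𝒩_x = {x + k : k ∈ 𝒩}`. -/
def nbhd {n : ℕ} (𝒩 : Finset (Lat n)) (x : Lat n) : Finset (Lat n) :=
  𝒩.image (fun k => x + k)

/-- The reflected neighborhood of the cell `x`: `𝒱_x = {x - k : k ∈ 𝒩}`. -/
def rnbhd {n : ℕ} (𝒩 : Finset (Lat n)) (x : Lat n) : Finset (Lat n) :=
  𝒩.image (fun k => x - k)

/-- A unitary `M` is causal relative to the neighborhood `𝒩` if conjugation `M† A M` maps
operators local upon a cell `x` to operators local upon `𝒩_x`. -/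
def Causal (q0 : A) (𝒩 : Finset (Lat n)) (M : H n A q0 →L[ℂ] H n A q0) : Prop :=
  ∀ (x : Lat n) (B : H n A q0 →L[ℂ] H n A q0), IsLocalUpon q0 {x} B →
    IsLocalUpon q0 (nbhd 𝒩 x) (ContinuousLinearMap.adjoint M ∘L B ∘L M)

end Local

/-- The standard basis vector of the one-cell Hilbert space `ℂ^A`. -/
def wVec (A : Type*) [Fintype A] (a : A) : EuclideanSpace ℂ A :=
  letI : DecidableEq A := Classical.decEq A
  EuclideanSpace.single a 1

/-- The configuration obtained from `c` by replacing the value at the cell `x` by `r`. -/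
def updateConf {n : ℕ} {A : Type*} {q0 : A} (x : Lat n) (r : A) (c : Conf n A q0) :
    Conf n A q0 :=
  ⟨Function.update c.1 x r, by
    refine Set.Finite.subset (c.2.union (Set.finite_singleton x)) ?_
    intro y hy
    rcases eq_or_ne y x with rfl | hxy
    · exact Set.mem_union_right _ rfl
    · exact Set.mem_union_left _ (by
        simpa [Function.update_of_ne hxy] using hy)⟩

/-- The subalgebra `𝔇_{y,x}` of `End(ℂ^A)`: endomorphisms `a` of the one-cell Hilbert space
such that the operator `ι_x(a)` local upon `{x}` implementing `a` at the cell `x` is of the form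
`R† B R` for some operator `B` local upon `{x - y}`. -/
def Dset {n : ℕ} {A : Type*} [Fintype A] (q0 : A)
    (R : H n A q0 →L[ℂ] H n A q0) (y x : Lat n) :
    Set (Module.End ℂ (EuclideanSpace ℂ A)) :=
  {a | ∃ B : H n A q0 →L[ℂ] H n A q0, IsLocalUpon q0 {x - y} B ∧
    ∀ c : Conf n A q0,
      (ContinuousLinearMap.adjoint R ∘L B ∘L R) (eVec c) =
        ∑ q : A, (inner ℂ (wVec A q) (a (wVec A (c.1 x))) : ℂ) • eVec (updateConf x q c)}



section Component

variable {n : ℕ} {𝒩 : Finset (Lat n)} {K : {z // z ∈ 𝒩} → Type*}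

/-- The propagation map on configurations in component form:
`(s c) x z = (c (x + z)) z`. -/
def sConf (qz : ∀ z : {z // z ∈ 𝒩}, K z) (c : Conf n (∀ z : {z // z ∈ 𝒩}, K z) qz) :
    Conf n (∀ z : {z // z ∈ 𝒩}, K z) qz :=
  ⟨fun x z => c.1 (x + z.1) z, by
    refine Set.Finite.subset
      (Set.finite_iUnion (fun z : {z // z ∈ 𝒩} =>
        (c.2.preimage ((add_left_injective z.1).injOn)))) ?_
    intro x hx
    obtain ⟨z, hz⟩ := Function.ne_iff.mp hx
    exact Set.mem_iUnion.2 ⟨z, fun h => hz (congrFun h z)⟩⟩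

end Component

/-- The support of a finite configuration, as a `Finset`. -/
def suppF {n : ℕ} {A : Type*} {q0 : A} (c : Conf n A q0) : Finset (Lat n) :=
  c.2.toFinset

/-- The property characterizing the local isomorphism `S̃ : H → Ĥ` induced by a one-cell
unitary `S : W → Ŵ`. -/
def StildeProp {n : ℕ} {A B : Type*} [Fintype A] [Fintype B] (q0 : A) (qh : B)
    (Slin : EuclideanSpace ℂ A ≃ₗᵢ[ℂ] EuclideanSpace ℂ B)
    (St : H n A q0 ≃ₗᵢ[ℂ] H n B qh) : Prop :=
  ∀ c : Conf n A q0,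
    St (eVec c) = ∑ g : {x // x ∈ suppF c} → B,
      (∏ x : {x // x ∈ suppF c}, (inner ℂ (wVec B (g x)) (Slin (wVec A (c.1 x.1))) : ℂ)) •
        eVec (override (suppF c) g (c0 n B qh))

/-- An endomorphism of the one-cell Hilbert space `ℂ^P`, `P = Π_{z ∈ 𝒩} K z`, acting only on
the `y`-th coordinate. -/
def ActsOnCoord {n : ℕ} {𝒩 : Finset (Lat n)} {K : {z // z ∈ 𝒩} → Type*}
    [∀ z, Fintype (K z)] (y : {z // z ∈ 𝒩})
    (Aop : Module.End ℂ (EuclideanSpace ℂ (∀ z : {z // z ∈ 𝒩}, K z))) : Prop :=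
  ∃ f : K y → K y → ℂ, ∀ p p' : ∀ z : {z // z ∈ 𝒩}, K z,
    ((∀ z : {z // z ∈ 𝒩}, z ≠ y → p z = p' z) →
      (inner ℂ (wVec _ p) (Aop (wVec _ p')) : ℂ) = f (p y) (p' y)) ∧
    (¬ (∀ z : {z // z ∈ 𝒩}, z ≠ y → p z = p' z) →
      (inner ℂ (wVec _ p) (Aop (wVec _ p')) : ℂ) = 0)

/-- A factorization of the module `W` as a tensor product `⨂_{k} V k` carrying the sets of
endomorphisms `Dsets k` onto the endomorphisms acting on the `k`-th tensor factor alone. -/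
structure PiTensorFactorization (ι : Type) [Fintype ι] [DecidableEq ι]
    (W : Type*) [AddCommGroup W] [Module ℂ W]
    (Dsets : ι → Set (Module.End ℂ W)) : Type _ where
  /-- The tensor factors. -/
  V : ι → Type
  [grp : ∀ k, AddCommGroup (V k)]
  [mod : ∀ k, Module ℂ (V k)]
  fin : ∀ k, FiniteDimensional ℂ (V k)
  /-- The linear isomorphism with the tensor product. -/
  S : W ≃ₗ[ℂ] PiTensorProduct ℂ V
  cond : ∀ y : ι,
    (fun a : Module.End ℂ W => S.conj a) '' (Dsets y) =
      Set.range (fun f : Module.End ℂ (V y) =>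
        (PiTensorProduct.map
          (Function.update (fun k => (LinearMap.id : V k →ₗ[ℂ] V k)) y f) :
            Module.End ℂ (PiTensorProduct ℂ V)))

/-- The continuous linear map underlying a linear isometry equivalence. -/
def isomCLM {E F : Type*} [NormedAddCommGroup E] [NormedAddCommGroup F]
    [NormedSpace ℂ E] [NormedSpace ℂ F] (e : E ≃ₗᵢ[ℂ] F) : E →L[ℂ] F :=
  e.toLinearIsometry.toContinuousLinearMap

end QCA

namespace lp

variable {ι κ E : Type*} [NormedAddCommGroup E] {p : ℝ≥0∞} {S : Set ι} {φ : ι → κ}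

theorem norm_rpow_indicator_comp (hp : 0 < p.toReal) (v : lp (fun _ : κ => E) p) :
    (fun i => ‖S.indicator (fun i => v (φ i)) i‖ ^ p.toReal) =
      S.indicator fun i => ‖v (φ i)‖ ^ p.toReal := by
  exact Set.indicator_comp_of_zero (g := fun x : E => ‖x‖ ^ p.toReal)
    (by simp [Real.zero_rpow hp.ne']) |>.symm

theorem summable_indicator_norm_rpow_comp (hp : 0 < p.toReal) (hφ : S.InjOn φ)
    (v : lp (fun _ : κ => E) p) :
    Summable (S.indicator fun i => ‖v (φ i)‖ ^ p.toReal) := by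
  rw [← summable_subtype_iff_indicator]
  exact ((memℓp_gen_iff hp).1 v.2).comp_injective hφ.injective

theorem memℓp_indicator_comp (hp : 0 < p.toReal) (hφ : S.InjOn φ) (v : lp (fun _ : κ => E) p) :
    Memℓp (S.indicator fun i => v (φ i)) p := by
  rw [memℓp_gen_iff hp, norm_rpow_indicator_comp hp]
  exact summable_indicator_norm_rpow_comp hp hφ v

variable [Fact (1 ≤ p)]

theorem norm_indicator_comp_le (hp : 0 < p.toReal) (hφ : S.InjOn φ) (v : lp (fun _ : κ => E) p) :
    ‖(⟨_, memℓp_indicator_comp hp hφ v⟩ : lp (fun _ : ι => E) p)‖ ≤ ‖v‖ := by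
  refine norm_le_of_tsum_le hp (norm_nonneg v) ?_
  rw [norm_rpow_eq_tsum hp]
  calc ∑' i, ‖S.indicator (fun i => v (φ i)) i‖ ^ p.toReal
      = ∑' i : S, ‖v (φ i)‖ ^ p.toReal := by
        rw [norm_rpow_indicator_comp hp]
        exact (tsum_subtype S fun i => ‖v (φ i)‖ ^ p.toReal).symm
    _ ≤ ∑' j, ‖v j‖ ^ p.toReal :=
        tsum_comp_le_tsum_of_inj ((memℓp_gen_iff hp).1 v.2) (fun _ => by positivity)
          hφ.injective

variable [NormedSpace ℂ E]

variable (E p) in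
def indicatorCompCLM (hp : 0 < p.toReal) (hφ : S.InjOn φ) :
    lp (fun _ : κ => E) p →L[ℂ] lp (fun _ : ι => E) p :=
  LinearMap.mkContinuous
    { toFun v := ⟨_, memℓp_indicator_comp hp hφ v⟩
      map_add' v w := lp.ext <| Set.indicator_add S _ _
      map_smul' c v := lp.ext <| Set.indicator_const_smul S c _ }
    1 fun v => by simpa using norm_indicator_comp_le hp hφ v

theorem indicatorCompCLM_apply (hp : 0 < p.toReal) (hφ : S.InjOn φ) (v : lp (fun _ : κ => E) p)
    (i : ι) :
    indicatorCompCLM E p hp hφ v i = S.indicator (fun i => v (φ i)) i := rfl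

end lp

namespace QCA

section Configuration

variable {n : ℕ} {Q : Type*} {q₀ : Q}

def restrict (D : Finset (Lat n)) (c : Conf n Q q₀) : {x // x ∈ D} → Q := fun x => c.1 x.1

variable {D D₁ D₂ : Finset (Lat n)} {x : Lat n}

theorem override_apply_of_mem (f : {x // x ∈ D} → Q) (c : Conf n Q q₀) (hx : x ∈ D) :
    (override D f c).1 x = f ⟨x, hx⟩ := dif_pos hx

theorem override_apply_of_notMem (f : {x // x ∈ D} → Q) (c : Conf n Q q₀) (hx : x ∉ D) :
    (override D f c).1 x = c.1 x := dif_neg hx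

theorem restrict_override (f : {x // x ∈ D} → Q) (c : Conf n Q q₀) :
    restrict D (override D f c) = f :=
  funext fun x => override_apply_of_mem f c x.2

theorem restrict_override_of_disjoint (h : Disjoint D₁ D₂) (f : {x // x ∈ D₂} → Q)
    (c : Conf n Q q₀) : restrict D₁ (override D₂ f c) = restrict D₁ c :=
  funext fun x => override_apply_of_notMem f c (Finset.disjoint_left.1 h x.2)

theorem Conf.ext {c c' : Conf n Q q₀} (h : ∀ x, c.1 x = c'.1 x) : c = c' :=
  Subtype.ext (funext h)

theorem override_override (f g : {x // x ∈ D} → Q) (c : Conf n Q q₀) :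
    override D f (override D g c) = override D f c := by
  refine Conf.ext fun x => ?_
  by_cases hx : x ∈ D
  · simp only [override_apply_of_mem _ _ hx]
  · simp only [override_apply_of_notMem _ _ hx]

theorem override_restrict (c : Conf n Q q₀) : override D (restrict D c) c = c := by
  refine Conf.ext fun x => ?_
  by_cases hx : x ∈ D
  · exact override_apply_of_mem _ _ hx
  · exact override_apply_of_notMem _ _ hx

theorem override_comm (h : Disjoint D₁ D₂) (f : {x // x ∈ D₁} → Q) (g : {x // x ∈ D₂} → Q)
    (c : Conf n Q q₀) : override D₁ f (override D₂ g c) = override D₂ g (override D₁ f c) := by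
  refine Conf.ext fun x => ?_
  by_cases hx₁ : x ∈ D₁
  · have hx₂ : x ∉ D₂ := Finset.disjoint_left.1 h hx₁
    simp only [override_apply_of_mem _ _ hx₁, override_apply_of_notMem _ _ hx₂]
  · by_cases hx₂ : x ∈ D₂
    · simp only [override_apply_of_mem _ _ hx₂, override_apply_of_notMem _ _ hx₁]
    · simp only [override_apply_of_notMem _ _ hx₁, override_apply_of_notMem _ _ hx₂]

theorem restrict_eq_and_override_eq_comm {f g : {x // x ∈ D} → Q} {c c' : Conf n Q q₀} :
    restrict D c' = f ∧ override D g c' = c ↔ restrict D c = g ∧ c' = override D f c := by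
  constructor
  · rintro ⟨rfl, rfl⟩
    exact ⟨restrict_override _ _, by rw [override_override, override_restrict]⟩
  · rintro ⟨rfl, rfl⟩
    exact ⟨restrict_override _ _, by rw [override_override, override_restrict]⟩

theorem override_injOn (f g : {x // x ∈ D} → Q) :
    Set.InjOn (override (q0 := q₀) D g) {c | restrict D c = f} := by
  intro c₁ (h₁ : restrict D c₁ = f) c₂ (h₂ : restrict D c₂ = f) h
  rw [← override_restrict c₁, ← override_restrict c₂, h₁, h₂,
    ← override_override f g c₁, h, override_override]

theorem eq_override_iff {f : {x // x ∈ D} → Q} {c c' : Conf n Q q₀} :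
    c' = override D f c ↔ restrict D c' = f ∧ ∀ x ∉ D, c'.1 x = c.1 x := by
  constructor
  · rintro rfl
    exact ⟨restrict_override f c, fun x hx => override_apply_of_notMem f c hx⟩
  · rintro ⟨rfl, h⟩
    refine Conf.ext fun x => ?_
    by_cases hx : x ∈ D
    · rw [override_apply_of_mem _ c hx]; rfl
    · rw [override_apply_of_notMem _ c hx, h x hx]

theorem restrict_singleton_eq_iff {c : Conf n Q q₀} {a : Q} :
    restrict {x} c = (fun _ => a) ↔ c.1 x = a := by
  constructor
  · intro h
    exact congrFun h ⟨x, Finset.mem_singleton_self x⟩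
  · intro h
    funext ⟨z, hz⟩
    obtain rfl := Finset.mem_singleton.1 hz
    exact h

theorem restrict_insert_eq_iff {c : Conf n Q q₀} {f : {z // z ∈ insert x D} → Q} :
    restrict (insert x D) c = f ↔
      c.1 x = f ⟨x, Finset.mem_insert_self x D⟩ ∧
        restrict D c = fun z : {z // z ∈ D} => f ⟨z.1, Finset.mem_insert_of_mem z.2⟩ := by
  constructor
  · rintro rfl
    exact ⟨rfl, rfl⟩
  · rintro ⟨hx, hD⟩
    funext ⟨z, hz⟩
    rcases Finset.mem_insert.1 hz with rfl | hz
    · exact hx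
    · exact congrFun hD ⟨z, hz⟩

theorem override_insert (hx : x ∉ D) (f : {z // z ∈ insert x D} → Q)
    (c : Conf n Q q₀) :
    override D (fun z : {z // z ∈ D} => f ⟨z.1, Finset.mem_insert_of_mem z.2⟩)
        (override {x} (fun _ => f ⟨x, Finset.mem_insert_self x D⟩) c) =
      override (insert x D) f c := by
  refine Conf.ext fun z => ?_
  by_cases hzD : z ∈ D
  · rw [override_apply_of_mem _ _ hzD,
      override_apply_of_mem _ _ (Finset.mem_insert_of_mem hzD)]
  · rw [override_apply_of_notMem _ _ hzD]
    by_cases hzx : z = x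
    · subst hzx
      rw [override_apply_of_mem _ _ (Finset.mem_singleton_self z),
        override_apply_of_mem _ _ (Finset.mem_insert_self z D)]
    · rw [override_apply_of_notMem _ _ (by simpa using hzx),
        override_apply_of_notMem _ _ (by simp [hzx, hzD])]

theorem override_singleton_self (c : Conf n Q q₀) : override {x} (fun _ => c.1 x) c = c := by
  rw [← restrict_singleton_eq_iff.2 rfl, override_restrict]

theorem override_sdiff_suppF {c c' : Conf n Q q₀} (h : ∀ x ∉ D, c'.1 x = c.1 x) :
    override (suppF c \ D) (fun _ => q₀) c' = override D (restrict D c') (c0 n Q q₀) := by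
  refine Conf.ext fun x => ?_
  by_cases hxD : x ∈ D
  · rw [override_apply_of_notMem _ _ (fun hx => (Finset.mem_sdiff.1 hx).2 hxD),
      override_apply_of_mem _ _ hxD]
    rfl
  · rw [override_apply_of_notMem _ _ hxD]
    by_cases hxc : x ∈ suppF c
    · exact override_apply_of_mem _ _ (Finset.mem_sdiff.2 ⟨hxc, hxD⟩)
    · rw [override_apply_of_notMem _ _ (fun hx => hxc (Finset.mem_sdiff.1 hx).1), h x hxD]
      by_contra hne
      exact hxc ((Set.Finite.mem_toFinset c.2).2 hne)

end Configuration

section HilbertSpace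

variable {n : ℕ} {Q : Type*} {q₀ : Q}

open Classical in
theorem eVec_apply (c c' : Conf n Q q₀) : eVec c c' = if c' = c then 1 else 0 := by
  unfold eVec
  convert lp.single_apply (E := fun _ : Conf n Q q₀ => ℂ) 2 c 1 c'
  rw [Pi.single_apply]

theorem ext_eVec {A B : H n Q q₀ →L[ℂ] H n Q q₀} (h : ∀ c, A (eVec c) = B (eVec c)) :
    A = B := by
  classical
  refine lp.ext_continuousLinearMap (by norm_num) fun c => ContinuousLinearMap.ext_ring ?_
  convert h c using 2 <;> simp [eVec]

variable [Fintype Q]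

open Classical in
theorem sum_smul_eVec_override_apply (D : Finset (Lat n)) (a : ({x // x ∈ D} → Q) → ℂ)
    (c c' : Conf n Q q₀) :
    (∑ f, a f • eVec (override D f c) : H n Q q₀) c' =
      if ∀ x ∉ D, c'.1 x = c.1 x then a (restrict D c') else 0 := by
  simp only [lp.coeFn_sum, Finset.sum_apply, lp.coeFn_smul, Pi.smul_apply, eVec_apply,
    smul_eq_mul, mul_ite, mul_one, mul_zero, eq_override_iff]
  split_ifs with h
  · rw [Finset.sum_congr rfl fun f _ => if_congr (and_iff_left h) rfl rfl]
    simp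
  · exact Finset.sum_eq_zero fun f _ => if_neg fun hf => h hf.2

end HilbertSpace

section MatrixUnit

variable {n : ℕ} {Q : Type*} {q₀ : Q}

def matrixUnit (D : Finset (Lat n)) (f g : {x // x ∈ D} → Q) : H n Q q₀ →L[ℂ] H n Q q₀ :=
  lp.indicatorCompCLM ℂ 2 (by norm_num) (override_injOn f g)

open Classical in
theorem matrixUnit_apply (D : Finset (Lat n)) (f g : {x // x ∈ D} → Q) (v : H n Q q₀)
    (c : Conf n Q q₀) :
    matrixUnit D f g v c = if restrict D c = f then v (override D g c) else 0 := by
  rw [matrixUnit, lp.indicatorCompCLM_apply, Set.indicator_apply]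
  rfl

open Classical in
theorem matrixUnit_eVec (D : Finset (Lat n)) (f g : {x // x ∈ D} → Q) (c : Conf n Q q₀) :
    matrixUnit D f g (eVec c) = if restrict D c = g then eVec (override D f c) else 0 := by
  refine lp.ext (funext fun c' => ?_)
  rw [matrixUnit_apply, eVec_apply, apply_ite (fun v : H n Q q₀ => v c'), eVec_apply,
    lp.coeFn_zero, Pi.zero_apply, ← ite_and, ← ite_and]
  exact if_congr restrict_eq_and_override_eq_comm rfl rfl

theorem matrixUnit_empty (f g : {x // x ∈ (∅ : Finset (Lat n))} → Q) :
    matrixUnit (q₀ := q₀) ∅ f g = 1 := by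
  refine ContinuousLinearMap.ext fun v => lp.ext (funext fun c => ?_)
  rw [matrixUnit_apply, if_pos (Subsingleton.elim _ _), Subsingleton.elim g (restrict ∅ c),
    override_restrict]
  rfl

theorem matrixUnit_insert {x : Lat n} {D : Finset (Lat n)} (hx : x ∉ D)
    (f g : {z // z ∈ insert x D} → Q) :
    matrixUnit (q₀ := q₀) (insert x D) f g =
      matrixUnit {x} (fun _ => f ⟨x, Finset.mem_insert_self x D⟩)
          (fun _ => g ⟨x, Finset.mem_insert_self x D⟩) *
        matrixUnit D (fun z => f ⟨z.1, Finset.mem_insert_of_mem z.2⟩)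
          (fun z => g ⟨z.1, Finset.mem_insert_of_mem z.2⟩) := by
  refine ContinuousLinearMap.ext fun v => lp.ext (funext fun c => ?_)
  rw [ContinuousLinearMap.mul_def, ContinuousLinearMap.comp_apply]
  simp only [matrixUnit_apply]
  rw [restrict_override_of_disjoint (Finset.disjoint_singleton_right.2 hx),
    override_insert hx]
  rw [← ite_and]
  by_cases h : restrict (insert x D) c = f
  · obtain ⟨hx, hD⟩ := restrict_insert_eq_iff.1 h
    rw [if_pos h, if_pos ⟨restrict_singleton_eq_iff.2 hx, hD⟩]
  · rw [if_neg h, if_neg fun h' =>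
      h (restrict_insert_eq_iff.2 ⟨restrict_singleton_eq_iff.1 h'.1, h'.2⟩)]

open Classical in
theorem coeff_of_commute_matrixUnit {T : H n Q q₀ →L[ℂ] H n Q q₀} {S : Finset (Lat n)}
    {f g : {x // x ∈ S} → Q}
    (h : Commute T (matrixUnit S f g)) (c c' : Conf n Q q₀) :
    (if restrict S c = g then T (eVec (override S f c)) c' else 0) =
      if restrict S c' = f then T (eVec c) (override S g c') else 0 := by
  have := congrArg (fun A : H n Q q₀ →L[ℂ] H n Q q₀ => A (eVec c) c') h.eq
  simp only [ContinuousLinearMap.mul_def, ContinuousLinearMap.comp_apply, matrixUnit_eVec,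
    matrixUnit_apply] at this
  rw [← this, apply_ite T, map_zero, apply_ite (fun v : H n Q q₀ => v c')]
  rfl

variable (q₀) in
def localSubalgebra (D : Finset (Lat n)) : Subalgebra ℂ (H n Q q₀ →L[ℂ] H n Q q₀) :=
  Subalgebra.centralizer ℂ
    {E | ∃ (S : Finset (Lat n)) (f g : {x // x ∈ S} → Q), Disjoint S D ∧ matrixUnit S f g = E}

theorem localSubalgebra_mono {D₁ D₂ : Finset (Lat n)} (h : D₁ ⊆ D₂) :
    localSubalgebra q₀ D₁ ≤ localSubalgebra q₀ D₂ :=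
  Subalgebra.centralizer_le ℂ _ _ fun _ ⟨S, f, g, hS, hE⟩ => ⟨S, f, g, hS.mono_right h, hE⟩

variable (q₀) in
def singleSiteMatrixUnits (D : Finset (Lat n)) : Set (H n Q q₀ →L[ℂ] H n Q q₀) :=
  {E | ∃ x ∈ D, ∃ a b : Q, matrixUnit {x} (fun _ => a) (fun _ => b) = E}

theorem matrixUnit_mem_adjoin_singleSiteMatrixUnits (D : Finset (Lat n))
    (f g : {x // x ∈ D} → Q) :
    matrixUnit D f g ∈ Algebra.adjoin ℂ (singleSiteMatrixUnits q₀ D) := by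
  induction D using Finset.induction_on with
  | empty => exact matrixUnit_empty f g ▸ Subalgebra.one_mem _
  | insert x D hx ih =>
    rw [matrixUnit_insert hx]
    refine Subalgebra.mul_mem _
      (Algebra.subset_adjoin ⟨x, Finset.mem_insert_self x D, _, _, rfl⟩)
      (Algebra.adjoin_mono ?_ (ih _ _))
    rintro _ ⟨y, hy, a, b, rfl⟩
    exact ⟨y, Finset.mem_insert_of_mem hy, a, b, rfl⟩

end MatrixUnit

section Locality

variable {n : ℕ} {Q : Type*} [Fintype Q] {q₀ : Q} {D D₁ D₂ : Finset (Lat n)}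
  {A B T : H n Q q₀ →L[ℂ] H n Q q₀}

theorem isLocalUpon_iff :
    IsLocalUpon q₀ D T ↔ ∃ a : ({x // x ∈ D} → Q) → ({x // x ∈ D} → Q) → ℂ,
      ∀ c, T (eVec c) = ∑ f, a f (restrict D c) • eVec (override D f c) :=
  Iff.rfl

theorem isLocalUpon_matrixUnit (D : Finset (Lat n)) (f g : {x // x ∈ D} → Q) :
    IsLocalUpon q₀ D (matrixUnit D f g) := by
  classical
  refine ⟨fun f' g' => if f' = f ∧ g' = g then 1 else 0, fun c => ?_⟩
  change _ = ∑ f', (if f' = f ∧ restrict D c = g then (1 : ℂ) else 0) • eVec (override D f' c)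
  rw [matrixUnit_eVec]
  by_cases hg : restrict D c = g <;> simp [hg]

theorem IsLocalUpon.commute (hA : IsLocalUpon q₀ D₁ A) (hB : IsLocalUpon q₀ D₂ B)
    (h : Disjoint D₁ D₂) : Commute A B := by
  obtain ⟨a, ha⟩ := isLocalUpon_iff.1 hA
  obtain ⟨b, hb⟩ := isLocalUpon_iff.1 hB
  refine ext_eVec fun c => ?_
  rw [ContinuousLinearMap.mul_def, ContinuousLinearMap.mul_def, ContinuousLinearMap.comp_apply,
    ContinuousLinearMap.comp_apply, ha, hb, map_sum, map_sum]
  simp only [map_smul, ha, hb, restrict_override_of_disjoint h,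
    restrict_override_of_disjoint h.symm, Finset.smul_sum, smul_smul, override_comm h]
  rw [Finset.sum_comm]
  simp only [mul_comm]

theorem isLocalUpon_of_forall_commute
    (h : ∀ S : Finset (Lat n), Disjoint S D → ∀ f g, Commute T (matrixUnit S f g)) :
    IsLocalUpon q₀ D T := by
  have hzero : ∀ c c' : Conf n Q q₀, (∃ x ∉ D, c'.1 x ≠ c.1 x) → T (eVec c) c' = 0 := by
    rintro c c' ⟨x, hxD, hx⟩
    have := coeff_of_commute_matrixUnit
      (h {x} (Finset.disjoint_singleton_left.2 hxD) (fun _ => c.1 x) fun _ => c.1 x) c c'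
    rwa [if_pos (restrict_singleton_eq_iff.2 rfl), override_singleton_self,
      if_neg (mt restrict_singleton_eq_iff.1 hx)] at this
  have hbase : ∀ c c' : Conf n Q q₀, (∀ x ∉ D, c'.1 x = c.1 x) →
      T (eVec c) c' = T (eVec (override D (restrict D c) (c0 n Q q₀)))
        (override D (restrict D c') (c0 n Q q₀)) := by
    intro c c' hcc'
    -- the matrix unit on `supp c \ D` resetting these cells to `q₀` moves both configurations
    -- to the quiescent background outside `D`
    have hS : Disjoint (suppF c \ D) D := Finset.sdiff_disjoint
    have hres : restrict (suppF c \ D) c' = restrict (suppF c \ D) c :=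
      funext fun x => hcc' x.1 (Finset.mem_sdiff.1 x.2).2
    have := coeff_of_commute_matrixUnit (h _ hS (restrict _ c') fun _ => q₀)
      (override (suppF c \ D) (fun _ => q₀) c) c'
    rwa [if_pos (restrict_override _ _), if_pos rfl, override_override, hres, override_restrict,
      override_sdiff_suppF hcc', override_sdiff_suppF fun _ _ => rfl] at this
  refine isLocalUpon_iff.2
    ⟨fun f g => T (eVec (override D g (c0 n Q q₀))) (override D f (c0 n Q q₀)),
      fun c => lp.ext (funext fun c' => ?_)⟩
  rw [sum_smul_eVec_override_apply]
  split_ifs with hcc'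
  · exact hbase c c' hcc'
  · push Not at hcc'
    exact hzero c c' hcc'

theorem eq_sum_smul_matrixUnit {a : ({x // x ∈ D} → Q) → ({x // x ∈ D} → Q) → ℂ}
    (ha : ∀ c, T (eVec c) = ∑ f, a f (restrict D c) • eVec (override D f c)) :
    T = ∑ f, ∑ g, a f g • matrixUnit D f g := by
  classical
  refine ext_eVec fun c => ?_
  simp only [ha, sum_apply, smul_apply, matrixUnit_eVec,
    smul_ite, smul_zero, Finset.sum_ite_eq, Finset.mem_univ, if_true]

theorem isLocalUpon_iff_mem_localSubalgebra :
    IsLocalUpon q₀ D T ↔ T ∈ localSubalgebra q₀ D := by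
  refine ⟨fun hT => ?_, fun hT => isLocalUpon_of_forall_commute fun S hS f g => ?_⟩
  · rintro _ ⟨S, f, g, hS, rfl⟩
    exact ((isLocalUpon_matrixUnit S f g).commute hT hS).eq
  · exact ((Subalgebra.mem_centralizer_iff ℂ).1 hT _ ⟨S, f, g, hS, rfl⟩).symm

theorem IsLocalUpon.mem_adjoin_singleSiteMatrixUnits (hT : IsLocalUpon q₀ D T) :
    T ∈ Algebra.adjoin ℂ (singleSiteMatrixUnits q₀ D) := by
  obtain ⟨a, ha⟩ := isLocalUpon_iff.1 hT
  rw [eq_sum_smul_matrixUnit ha]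
  exact Subalgebra.sum_mem _ fun f _ => Subalgebra.sum_mem _ fun g _ =>
    Subalgebra.smul_mem _ (matrixUnit_mem_adjoin_singleSiteMatrixUnits D f g) _

end Locality

section Conjugation

variable {n : ℕ} {Q : Type*} {q₀ : Q} {M : H n Q q₀ →L[ℂ] H n Q q₀}

def conjAut (hM : M ∈ unitary (H n Q q₀ →L[ℂ] H n Q q₀)) :
    (H n Q q₀ →L[ℂ] H n Q q₀) ≃⋆ₐ[ℂ] (H n Q q₀ →L[ℂ] H n Q q₀) :=
  Unitary.conjStarAlgAut ℂ _ (star ⟨M, hM⟩)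

theorem conjAut_apply (hM : M ∈ unitary (H n Q q₀ →L[ℂ] H n Q q₀))
    (A : H n Q q₀ →L[ℂ] H n Q q₀) :
    conjAut hM A = ContinuousLinearMap.adjoint M ∘L A ∘L M := by
  rw [conjAut, Unitary.conjStarAlgAut_star_apply, ContinuousLinearMap.star_eq_adjoint, mul_assoc]
  rfl

end Conjugation

section Causality

variable {n : ℕ} {Q : Type*} [Fintype Q] {q₀ : Q} {𝒩 D : Finset (Lat n)}
  {M T : H n Q q₀ →L[ℂ] H n Q q₀}

theorem disjoint_biUnion_nbhd_of_disjoint_biUnion_rnbhd {S : Finset (Lat n)}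
    (h : Disjoint S (D.biUnion (rnbhd 𝒩))) : Disjoint (S.biUnion (nbhd 𝒩)) D := by
  simp only [Finset.disjoint_left, Finset.mem_biUnion, nbhd, rnbhd, Finset.mem_image] at h ⊢
  rintro _ ⟨y, hy, k, hk, rfl⟩ hD
  exact h hy ⟨y + k, hD, k, hk, add_sub_cancel_right y k⟩

theorem Causal.isLocalUpon_conj (hM : M ∈ unitary (H n Q q₀ →L[ℂ] H n Q q₀))
    (hC : Causal q₀ 𝒩 M) (hT : IsLocalUpon q₀ D T) :
    IsLocalUpon q₀ (D.biUnion (nbhd 𝒩)) (ContinuousLinearMap.adjoint M ∘L T ∘L M) := by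
  suffices Algebra.adjoin ℂ (singleSiteMatrixUnits q₀ D) ≤
      (localSubalgebra q₀ (D.biUnion (nbhd 𝒩))).comap (conjAut hM).toAlgEquiv.toAlgHom by
    rw [← conjAut_apply hM]
    exact isLocalUpon_iff_mem_localSubalgebra.2 (this hT.mem_adjoin_singleSiteMatrixUnits)
  refine Algebra.adjoin_le ?_
  rintro _ ⟨x, hx, a, b, rfl⟩
  refine localSubalgebra_mono (Finset.subset_biUnion_of_mem (nbhd 𝒩) hx) ?_
  change conjAut hM _ ∈ _
  rw [conjAut_apply]
  exact isLocalUpon_iff_mem_localSubalgebra.1 (hC x _ (isLocalUpon_matrixUnit _ _ _))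

theorem Causal.isLocalUpon_of_conj (hM : M ∈ unitary (H n Q q₀ →L[ℂ] H n Q q₀))
    (hC : Causal q₀ 𝒩 M) (hT : IsLocalUpon q₀ D (ContinuousLinearMap.adjoint M ∘L T ∘L M)) :
    IsLocalUpon q₀ (D.biUnion (rnbhd 𝒩)) T := by
  refine isLocalUpon_of_forall_commute fun S hS f g => ?_
  have hE := hC.isLocalUpon_conj hM (isLocalUpon_matrixUnit S f g)
  rw [← conjAut_apply hM] at hT hE
  have := (hT.commute hE (disjoint_biUnion_nbhd_of_disjoint_biUnion_rnbhd hS).symm).map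
    (conjAut hM).symm
  rwa [StarAlgEquiv.symm_apply_apply, StarAlgEquiv.symm_apply_apply] at this

end Causality

theorem local_algebra_invariant_under_conjugation_general
    (n : ℕ) (Q : Type) [Fintype Q] (q₀ : Q) (𝒩 : Finset (Lat n))
    (M : H n Q q₀ →L[ℂ] H n Q q₀) (hM : M ∈ unitary (H n Q q₀ →L[ℂ] H n Q q₀))
    (hC : Causal q₀ 𝒩 M) (T : H n Q q₀ →L[ℂ] H n Q q₀) :
    (∃ D : Finset (Lat n), IsLocalUpon q₀ D T) ↔
      (∃ D : Finset (Lat n), IsLocalUpon q₀ D (ContinuousLinearMap.adjoint M ∘L T ∘L M)) :=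
  ⟨fun ⟨_, hT⟩ => ⟨_, hC.isLocalUpon_conj hM hT⟩,
    fun ⟨_, hT⟩ => ⟨_, hC.isLocalUpon_of_conj hM hT⟩⟩

/-- For a causal unitary `M`, an operator is local (upon some finite subset)
if and only if its conjugate `M† T M` is local (upon some finite subset). -/
theorem local_algebra_invariant_under_conjugation
    (n : ℕ) (hn : 1 ≤ n) (Q : Type) [Fintype Q] (q₀ : Q) (𝒩 : Finset (Lat n))
    (M : H n Q q₀ →L[ℂ] H n Q q₀) (hM : M ∈ unitary (H n Q q₀ →L[ℂ] H n Q q₀))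
    (hC : Causal q₀ 𝒩 M) (T : H n Q q₀ →L[ℂ] H n Q q₀) :
    (∃ D : Finset (Lat n), IsLocalUpon q₀ D T) ↔
      (∃ D : Finset (Lat n), IsLocalUpon q₀ D (ContinuousLinearMap.adjoint M ∘L T ∘L M)) :=
  local_algebra_invariant_under_conjugation_general n Q q₀ 𝒩 M hM hC T

end QCA
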